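/- For the simple symmetric random walk and tau_1 = inf{n >= 1 : S_n = 1}, the number of non-negative steps N_{0+}(tau_1) = #{1 <= j <= tau_1 : S_j >= 0} has probability generating function E[z^{N_{0+}(tau_1)}] = z/(2 - z) for |z| <= 1; equivalently N_{0+}(tau_1) has the geometric distribution P(N_{0+}(tau_1) = k) = 2^{-k} for k >= 1. -/

import Mathlib

/-!
Before `τ₁` the walk stays at or below `0`, so `N` is one more than the number of returns to `0`
before `τ₁`. A first-passage path to `1` is either a single up-step, or a down-step followed by a
first-passage path from `-1` to `0` (along which the walk is negative) and a first-passage path from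
`0` to `1` (which contributes its own count), so the count goes up by one in the second case.

Weighting a path of length `n` by `2⁻ⁿ`, the probability of its cylinder, the total weight `W` of
first-passage paths is the probability of ever reaching `1`, so `W ≤ 1`, and the decomposition
gives `W = 1/2 + W²/2`, that is `(W - 1)² = 0`, hence `W = 1`. The weight `p k` of first-passage
paths with count `k` then satisfies `p 1 = 1/2` and `p (k + 1) = W p k / 2 = p k / 2`.
-/

open scoped ENNReal

lemma ENNReal.eq_one_of_eq_inv_two_add (x : ℝ≥0∞) (hx : x ≠ ⊤)
    (h : x = 2⁻¹ + 2⁻¹ * x * x) : x = 1 := by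
  have hreal : x.toReal = 2⁻¹ + 2⁻¹ * x.toReal * x.toReal := by
    have := congrArg ENNReal.toReal h
    rwa [ENNReal.toReal_add (by simp) (by simp [ENNReal.mul_eq_top, hx]), ENNReal.toReal_mul,
      ENNReal.toReal_mul, ENNReal.toReal_inv, ENNReal.toReal_ofNat] at this
  have hsq : (x.toReal - 1) ^ 2 = 0 := by linear_combination (-2) * hreal
  rw [← ENNReal.ofReal_toReal hx, sub_eq_zero.mp (pow_eq_zero_iff two_ne_zero |>.mp hsq),
    ENNReal.ofReal_one]

namespace LatticePath

def step (b : Bool) : ℤ := if b then 1 else -1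

def height (l : List Bool) (j : ℕ) : ℤ := ((l.take j).map step).sum

def IsFirstPassage (l : List Bool) : Prop :=
  height l l.length = 1 ∧ ∀ j < l.length, height l j ≤ 0

def nonnegCount (l : List Bool) : ℕ :=
  ((Finset.Icc 1 l.length).filter fun j => 0 ≤ height l j).card

lemma step_le_one (b : Bool) : step b ≤ 1 := by cases b <;> decide

lemma step_injective : Function.Injective step := by decide

@[simp] lemma height_zero (l : List Bool) : height l 0 = 0 := by simp [height]

lemma height_cons_succ (b : Bool) (l : List Bool) (j : ℕ) :
    height (b :: l) (j + 1) = step b + height l j := by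
  simp [height]

lemma height_succ {l : List Bool} {j : ℕ} (hj : j < l.length) :
    height l (j + 1) = height l j + step l[j] := by
  simp only [height, List.take_add_one, List.getElem?_eq_getElem hj, Option.toList_some,
    List.map_append, List.map_cons, List.map_nil, List.sum_append, List.sum_cons, List.sum_nil,
    add_zero]

lemma height_take {l : List Bool} {i j : ℕ} (h : i ≤ j) : height (l.take j) i = height l i := by
  simp [height, List.take_take, Nat.min_eq_left h]

lemma height_append_of_le {m r : List Bool} {j : ℕ} (hj : j ≤ m.length) :
    height (m ++ r) j = height m j := by
  simp [height, List.take_append_of_le_length hj]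

lemma height_length_add (m r : List Bool) (j : ℕ) :
    height (m ++ r) (m.length + j) = height m m.length + height r j := by
  simp [height, List.take_length_add_append]

lemma height_cons_false_append_of_le {m r : List Bool} {j : ℕ} (hj : j ≤ m.length) :
    height (false :: (m ++ r)) (j + 1) = height m j - 1 := by
  rw [height_cons_succ, height_append_of_le hj, step, if_neg Bool.false_ne_true]
  ring

lemma height_cons_false_append_add {m r : List Bool} (hm : height m m.length = 1) (j : ℕ) :
    height (false :: (m ++ r)) (m.length + j + 1) = height r j := by
  rw [height_cons_succ, height_length_add, hm, step, if_neg Bool.false_ne_true]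
  ring

lemma IsFirstPassage.length_pos {l : List Bool} (hl : IsFirstPassage l) : 0 < l.length := by
  rcases l with _ | _
  · simpa using hl.1
  · simp

lemma isFirstPassage_singleton_true : IsFirstPassage [true] :=
  ⟨by decide, fun j hj => by simp_all [height]⟩

lemma nonnegCount_singleton_true : nonnegCount [true] = 1 := by decide

lemma IsFirstPassage.one_le_nonnegCount {l : List Bool} (hl : IsFirstPassage l) :
    1 ≤ nonnegCount l :=
  Finset.card_pos.mpr ⟨l.length, Finset.mem_filter.mpr
    ⟨Finset.mem_Icc.mpr ⟨hl.length_pos, le_rfl⟩, hl.1 ▸ zero_le_one⟩⟩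

/-- Cut the path at the first time its height reaches `1`; it cannot overshoot since steps are
at most `1`. -/
lemma exists_isFirstPassage_prefix {l : List Bool} (hl : 1 ≤ height l l.length) :
    ∃ m r, l = m ++ r ∧ IsFirstPassage m := by
  classical
  have hex : ∃ j, 1 ≤ height l j := ⟨_, hl⟩
  have hn : 1 ≤ height l (Nat.find hex) := Nat.find_spec hex
  have hbefore : ∀ j < Nat.find hex, height l j ≤ 0 := fun j hj => by
    simpa [Int.lt_iff_add_one_le] using Nat.find_min hex hj
  have hnlen : Nat.find hex ≤ l.length := Nat.find_min' hex hl
  obtain ⟨j, hj⟩ : ∃ j, Nat.find hex = j + 1 := Nat.exists_eq_succ_of_ne_zero fun h => by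
    simp [h] at hn
  rw [hj] at hn hbefore hnlen
  have hstep := height_succ (l := l) (j := j) (by omega)
  have := step_le_one l[j]
  have := hbefore j (by omega)
  refine ⟨l.take (j + 1), l.drop (j + 1), (List.take_append_drop _ _).symm, ?_, ?_⟩
  · rw [List.length_take_of_le hnlen, height_take le_rfl]
    omega
  · intro i hi
    rw [List.length_take_of_le hnlen] at hi
    rw [height_take hi.le]
    exact hbefore i hi

lemma IsFirstPassage.cons_false_append {m r : List Bool} (hm : IsFirstPassage m)
    (hr : IsFirstPassage r) : IsFirstPassage (false :: (m ++ r)) := by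
  have hlen : (false :: (m ++ r)).length = m.length + r.length + 1 := by simp
  refine ⟨by rw [hlen, height_cons_false_append_add hm.1, hr.1], fun j hj => ?_⟩
  rw [hlen] at hj
  rcases j with _ | j
  · simp
  obtain hjm | hjm := le_or_gt j m.length
  · rw [height_cons_false_append_of_le hjm]
    obtain hjm | rfl := hjm.lt_or_eq
    · linarith [hm.2 j hjm]
    · linarith [hm.1]
  · obtain ⟨i, rfl⟩ := Nat.exists_eq_add_of_le hjm.le
    rw [height_cons_false_append_add hm.1]
    exact hr.2 i (by omega)

lemma nonnegCount_eq_sum (l : List Bool) :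
    nonnegCount l = ∑ j ∈ Finset.range l.length, if 0 ≤ height l (j + 1) then 1 else 0 := by
  rw [nonnegCount, Finset.card_filter, ← Finset.Ico_add_one_right_eq_Icc,
    Finset.sum_Ico_eq_sum_range, Nat.add_sub_cancel]
  simp only [add_comm]

lemma nonnegCount_cons_false_append {m : List Bool} (hm : IsFirstPassage m) (r : List Bool) :
    nonnegCount (false :: (m ++ r)) = nonnegCount r + 1 := by
  have hlen : (false :: (m ++ r)).length = m.length + (r.length + 1) := by
    rw [List.length_cons, List.length_append, add_assoc]
  have hneg : ∀ j ∈ Finset.range m.length,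
      (if 0 ≤ height (false :: (m ++ r)) (j + 1) then 1 else 0) = 0 := fun j hj => by
    have hj := Finset.mem_range.mp hj
    rw [height_cons_false_append_of_le hj.le, if_neg (by linarith [hm.2 j hj])]
  rw [nonnegCount_eq_sum, hlen, Finset.sum_range_add, Finset.sum_eq_zero hneg, zero_add]
  simp only [height_cons_false_append_add hm.1]
  rw [Finset.sum_range_succ', nonnegCount_eq_sum]
  simp

lemma IsFirstPassage.eq_singleton_or_exists {l : List Bool} (hl : IsFirstPassage l) :
    l = [true] ∨ ∃ m r, IsFirstPassage m ∧ IsFirstPassage r ∧ l = false :: (m ++ r) := by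
  obtain _ | ⟨_ | _, t⟩ := l
  · exact absurd hl.length_pos (by simp)
  · right
    have ht : height t t.length = 2 := by
      have := hl.1
      rw [List.length_cons, height_cons_succ, step, if_neg Bool.false_ne_true] at this
      omega
    obtain ⟨m, r, rfl, hm⟩ := exists_isFirstPassage_prefix (l := t) (by omega)
    have hlen : (false :: (m ++ r)).length = m.length + r.length + 1 := by simp
    refine ⟨m, r, hm, ⟨?_, fun j hj => ?_⟩, rfl⟩
    · simpa [hlen, height_cons_false_append_add hm.1] using hl.1
    · rw [← height_cons_false_append_add hm.1]
      exact hl.2 _ (by omega)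
  · left
    obtain _ | ⟨c, t⟩ := t
    · rfl
    · have := hl.2 1 (by simp)
      simp [height, step] at this

lemma IsFirstPassage.eq_nil_of_append {m a : List Bool} (hm : IsFirstPassage m)
    (hma : IsFirstPassage (m ++ a)) : a = [] := by
  by_contra ha
  have := hma.2 m.length (by simpa using List.length_pos_of_ne_nil ha)
  rw [height_append_of_le le_rfl, hm.1] at this
  exact absurd this (by norm_num)

lemma IsFirstPassage.append_inj {m r m' r' : List Bool} (hm : IsFirstPassage m)
    (hm' : IsFirstPassage m') (h : m ++ r = m' ++ r') : m = m' ∧ r = r' := by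
  rcases List.append_eq_append_iff.mp h with ⟨a, rfl, rfl⟩ | ⟨c, rfl, rfl⟩
  · simp [hm.eq_nil_of_append hm']
  · simp [hm'.eq_nil_of_append hm]

noncomputable def weight (l : List Bool) : ℝ≥0∞ := 2⁻¹ ^ l.length

lemma weight_cons_false_append (m r : List Bool) :
    weight (false :: (m ++ r)) = 2⁻¹ * weight m * weight r := by
  simp only [weight, List.length_cons, List.length_append, pow_succ, pow_add]
  ring

noncomputable def firstPassageWeight : ℝ≥0∞ := ∑' l : {l // IsFirstPassage l}, weight l

noncomputable def firstPassageWeightOfCount (k : ℕ) : ℝ≥0∞ :=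
  ∑' l : {l // IsFirstPassage l ∧ nonnegCount l = k}, weight l

lemma firstPassageWeightOfCount_zero : firstPassageWeightOfCount 0 = 0 := by
  have : IsEmpty {l // IsFirstPassage l ∧ nonnegCount l = 0} :=
    ⟨fun l => by have := l.2.1.one_le_nonnegCount; omega⟩
  simp [firstPassageWeightOfCount]

lemma firstPassageWeightOfCount_one : firstPassageWeightOfCount 1 = 2⁻¹ := by
  have hsingleton : ∀ l : {l // IsFirstPassage l ∧ nonnegCount l = 1},
      l = ⟨[true], isFirstPassage_singleton_true, nonnegCount_singleton_true⟩ := by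
    rintro ⟨l, hl, hc⟩
    obtain rfl | ⟨m, r, hm, hr, rfl⟩ := hl.eq_singleton_or_exists
    · rfl
    · have := hr.one_le_nonnegCount
      rw [nonnegCount_cons_false_append hm] at hc
      omega
  rw [firstPassageWeightOfCount, tsum_eq_single _ fun l hl => absurd (hsingleton l) hl]
  simp [weight]

noncomputable def consFalseAppendEquiv (k : ℕ) :
    {m // IsFirstPassage m} × {r // IsFirstPassage r ∧ nonnegCount r = k + 1} ≃
      {l // IsFirstPassage l ∧ nonnegCount l = k + 2} :=
  Equiv.ofBijective
    (fun p => ⟨false :: (p.1.1 ++ p.2.1), p.1.2.cons_false_append p.2.2.1,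
      by rw [nonnegCount_cons_false_append p.1.2, p.2.2.2]⟩)
    ⟨fun p q h => by
      obtain ⟨hm, hr⟩ := p.1.2.append_inj q.1.2 (List.cons_injective (congrArg Subtype.val h))
      exact Prod.ext (Subtype.ext hm) (Subtype.ext hr),
    fun ⟨l, hl, hc⟩ => by
      obtain rfl | ⟨m, r, hm, hr, rfl⟩ := hl.eq_singleton_or_exists
      · simp [nonnegCount_singleton_true] at hc
      · rw [nonnegCount_cons_false_append hm] at hc
        exact ⟨(⟨m, hm⟩, ⟨r, hr, by omega⟩), rfl⟩⟩

@[simp] lemma coe_consFalseAppendEquiv_apply (k : ℕ)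
    (p : {m // IsFirstPassage m} × {r // IsFirstPassage r ∧ nonnegCount r = k + 1}) :
    (consFalseAppendEquiv k p : List Bool) = false :: (p.1.1 ++ p.2.1) :=
  rfl

lemma firstPassageWeightOfCount_add_two (k : ℕ) :
    firstPassageWeightOfCount (k + 2) =
      2⁻¹ * firstPassageWeight * firstPassageWeightOfCount (k + 1) := by
  rw [firstPassageWeightOfCount, ← (consFalseAppendEquiv k).tsum_eq]
  simp only [coe_consFalseAppendEquiv_apply, weight_cons_false_append, ENNReal.tsum_prod',
    ENNReal.tsum_mul_left, ENNReal.tsum_mul_right, firstPassageWeight, firstPassageWeightOfCount]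

lemma firstPassageWeight_eq_tsum :
    firstPassageWeight = ∑' k, firstPassageWeightOfCount k := by
  rw [firstPassageWeight, ← ENNReal.tsum_fiberwise _ fun l : {l // IsFirstPassage l} =>
    nonnegCount l]
  refine tsum_congr fun k => ?_
  exact (Equiv.subtypeSubtypeEquivSubtypeInter IsFirstPassage (nonnegCount · = k)).tsum_eq
    (fun l => weight l.1)

lemma firstPassageWeight_eq :
    firstPassageWeight = 2⁻¹ + 2⁻¹ * firstPassageWeight * firstPassageWeight := by
  have hshift : ∑' k, firstPassageWeightOfCount (k + 1) = firstPassageWeight := by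
    conv_rhs => rw [firstPassageWeight_eq_tsum, tsum_eq_zero_add' ENNReal.summable,
      firstPassageWeightOfCount_zero, zero_add]
  conv_lhs => rw [firstPassageWeight_eq_tsum, tsum_eq_zero_add' ENNReal.summable,
    tsum_eq_zero_add' ENNReal.summable]
  simp only [firstPassageWeightOfCount_zero, firstPassageWeightOfCount_one,
    firstPassageWeightOfCount_add_two, ENNReal.tsum_mul_left, hshift, zero_add]

lemma firstPassageWeightOfCount_eq_pow (h : firstPassageWeight = 1) {k : ℕ} (hk : 1 ≤ k) :
    firstPassageWeightOfCount k = 2⁻¹ ^ k := by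
  obtain ⟨j, rfl⟩ := Nat.exists_eq_add_of_le' hk
  induction j with
  | zero => exact firstPassageWeightOfCount_one.trans (pow_one _).symm
  | succ j ih =>
    rw [firstPassageWeightOfCount_add_two, h, ih (by omega), mul_one, pow_succ' _ (j + 1)]

end LatticePath

open MeasureTheory

lemma measurable_sInf_setOf {Ω : Type*} [MeasurableSpace Ω] {p : Ω → ℕ → Prop}
    (hp : ∀ n, MeasurableSet {ω | p ω n}) : Measurable fun ω => sInf {n | p ω n} := by
  refine measurable_to_countable' fun k => ?_
  have hfiber : (fun ω => sInf {n | p ω n}) ⁻¹' {k} =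
      ({ω | p ω k} ∩ ⋂ m ∈ Finset.range k, {ω | p ω m}ᶜ) ∪
        ({_ω | k = 0} ∩ ⋂ m, {ω | p ω m}ᶜ) := by
    ext ω
    simp only [Set.mem_preimage, Set.mem_singleton_iff, Set.mem_union, Set.mem_inter_iff,
      Set.mem_ofPred_eq, Set.mem_iInter, Finset.mem_range, Set.mem_compl_iff]
    constructor
    · rintro rfl
      by_cases h : {n | p ω n}.Nonempty
      · exact Or.inl ⟨Nat.sInf_mem h, fun m hm => Nat.notMem_of_lt_sInf hm⟩
      · rw [Set.not_nonempty_iff_eq_empty] at h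
        exact Or.inr ⟨by rw [h, Nat.sInf_empty], fun m hm => h.subset hm⟩
    · rintro (⟨hk, hlt⟩ | ⟨rfl, hnone⟩)
      · exact IsLeast.csInf_eq ⟨hk, fun m hm => not_lt.mp fun h => hlt m h hm⟩
      · have hempty : {n | p ω n} = ∅ := Set.eq_empty_of_forall_notMem hnone
        rw [hempty, Nat.sInf_empty]
  rw [hfiber]
  exact ((hp k).inter (.biInter (Finset.range k).countable_toSet fun m _ => (hp m).compl)).union
    ((MeasurableSet.const _).inter (.iInter fun m => (hp m).compl))

lemma integral_pow_eq_tsum {Ω : Type*} [MeasurableSpace Ω] {P : Measure Ω} [IsFiniteMeasure P]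
    {N : Ω → ℕ} (hN : Measurable N) {z : ℝ} (hz : |z| ≤ 1) :
    ∫ ω, z ^ N ω ∂P = ∑' k, P.real {ω | N ω = k} * z ^ k := by
  have hint : Integrable (fun k : ℕ => z ^ k) (P.map N) :=
    .of_bound measurable_from_nat.aestronglyMeasurable 1 (.of_forall fun k => by
      simpa [norm_pow] using pow_le_one₀ (abs_nonneg z) hz)
  rw [← integral_map hN.aemeasurable measurable_from_nat.aestronglyMeasurable,
    integral_countable hint]
  exact tsum_congr fun k => by
    rw [map_measureReal_apply hN (measurableSet_singleton k), smul_eq_mul]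
    rfl

lemma integral_pow_eq_of_measure_eq_pow {Ω : Type*} [MeasurableSpace Ω] {P : Measure Ω}
    [IsFiniteMeasure P] {N : Ω → ℕ} (hN : Measurable N) (h0 : P {ω | N ω = 0} = 0)
    (h : ∀ k, 1 ≤ k → P {ω | N ω = k} = 2⁻¹ ^ k) {z : ℝ} (hz : |z| ≤ 1) :
    ∫ ω, z ^ N ω ∂P = z / (2 - z) := by
  have hz2 : |z / 2| < 1 := by rw [abs_div, abs_two]; linarith
  have h2z : 2 - z ≠ 0 := by linarith [(abs_le.mp hz).2]
  have hterm : ∀ k, P.real {ω | N ω = k + 1} * z ^ (k + 1) = z / 2 * (z / 2) ^ k := fun k => by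
    rw [measureReal_def, h (k + 1) (by omega), ENNReal.toReal_pow, ENNReal.toReal_inv,
      ENNReal.toReal_ofNat]
    ring
  have hsum : z / 2 * (1 - z / 2)⁻¹ = z / (2 - z) := by field_simp
  have hshift : HasSum (fun k => P.real {ω | N ω = k + 1} * z ^ (k + 1)) (z / (2 - z)) := by
    simpa only [hterm, hsum] using (hasSum_geometric_of_abs_lt_one hz2).mul_left (z / 2)
  rw [integral_pow_eq_tsum hN hz]
  exact ((hasSum_nat_add_iff' 1).mp (by simpa [measureReal_def, h0] using hshift)).tsum_eq

namespace SimpleRandomWalk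

open ProbabilityTheory LatticePath

noncomputable def rademacher : Measure ℝ :=
  (1 / 2 : ℝ≥0∞) • Measure.dirac 1 + (1 / 2 : ℝ≥0∞) • Measure.dirac (-1)

lemma rademacher_singleton_step (b : Bool) : rademacher {(step b : ℝ)} = 2⁻¹ := by
  cases b <;> simp [rademacher, step, Measure.dirac_apply', Set.indicator] <;> norm_num

lemma ae_rademacher : ∀ᵐ x ∂rademacher, x = 1 ∨ x = -1 := by
  simp [rademacher]

variable {Ω : Type*} {X : ℕ → Ω → ℝ} {S : ℕ → Ω → ℝ} {τ : Ω → ℕ} {N : Ω → ℕ} {l : List Bool}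
  {ω : Ω}

def cylinder (X : ℕ → Ω → ℝ) (l : List Bool) : Set Ω :=
  {ω | ∀ i (hi : i < l.length), X i ω = step l[i]}

lemma cylinder_eq_biInter (X : ℕ → Ω → ℝ) (l : List Bool) :
    cylinder X l = ⋂ i ∈ Finset.range l.length, X i ⁻¹' {(step (l.getD i false) : ℝ)} := by
  ext ω
  simp +contextual [cylinder]

lemma walk_eq_height (hS : ∀ m ω, S m ω = ∑ i ∈ Finset.range m, X i ω)
    (hω : ω ∈ cylinder X l) {j : ℕ} (hj : j ≤ l.length) : S j ω = height l j := by
  induction j with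
  | zero => simp [hS]
  | succ j ih =>
    rw [hS, Finset.sum_range_succ, ← hS, ih (by omega), hω j (by omega), height_succ (by omega)]
    push_cast
    ring

lemma length_le_of_mem_cylinder (hS : ∀ m ω, S m ω = ∑ i ∈ Finset.range m, X i ω)
    {l' : List Bool} (hl : IsFirstPassage l) (hl' : IsFirstPassage l') (hω : ω ∈ cylinder X l)
    (hω' : ω ∈ cylinder X l') : l.length ≤ l'.length := by
  by_contra! hlt
  have h : (height l' l'.length : ℝ) = height l l'.length :=
    (walk_eq_height hS hω' le_rfl).symm.trans (walk_eq_height hS hω hlt.le)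
  rw [hl'.1] at h
  have := hl.2 _ hlt
  have : (1 : ℤ) = height l l'.length := by exact_mod_cast h
  omega

lemma eq_of_mem_cylinder (hS : ∀ m ω, S m ω = ∑ i ∈ Finset.range m, X i ω) {l' : List Bool}
    (hl : IsFirstPassage l) (hl' : IsFirstPassage l') (hω : ω ∈ cylinder X l)
    (hω' : ω ∈ cylinder X l') : l = l' :=
  List.ext_getElem
    ((length_le_of_mem_cylinder hS hl hl' hω hω').antisymm
      (length_le_of_mem_cylinder hS hl' hl hω' hω))
    fun i h h' => step_injective (by exact_mod_cast (hω i h).symm.trans (hω' i h'))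

lemma hittingTime_eq_length (hS : ∀ m ω, S m ω = ∑ i ∈ Finset.range m, X i ω)
    (hτ : ∀ ω, τ ω = sInf {n : ℕ | 1 ≤ n ∧ S n ω = 1}) (hl : IsFirstPassage l)
    (hω : ω ∈ cylinder X l) : τ ω = l.length := by
  rw [hτ]
  refine IsLeast.csInf_eq ⟨⟨hl.length_pos, ?_⟩, fun n hn => ?_⟩
  · rw [walk_eq_height hS hω le_rfl, hl.1, Int.cast_one]
  · by_contra! hlt
    have h := hn.2
    rw [walk_eq_height hS hω hlt.le] at h
    have := hl.2 n hlt
    have : height l n = 1 := by exact_mod_cast h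
    omega

lemma nonnegCount_eq_of_mem_cylinder (hS : ∀ m ω, S m ω = ∑ i ∈ Finset.range m, X i ω)
    (hτ : ∀ ω, τ ω = sInf {n : ℕ | 1 ≤ n ∧ S n ω = 1})
    (hN : ∀ ω, N ω = ((Finset.Icc 1 (τ ω)).filter (fun j => 0 ≤ S j ω)).card)
    (hl : IsFirstPassage l) (hω : ω ∈ cylinder X l) : N ω = nonnegCount l := by
  rw [hN, hittingTime_eq_length hS hτ hl hω, nonnegCount]
  congr 1
  refine Finset.filter_congr fun j hj => ?_
  rw [walk_eq_height hS hω (Finset.mem_Icc.mp hj).2, Int.cast_nonneg_iff]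

lemma exists_isFirstPassage_mem_cylinder (hS : ∀ m ω, S m ω = ∑ i ∈ Finset.range m, X i ω)
    (hω : ∀ i, X i ω = 1 ∨ X i ω = -1) {n : ℕ} (hn : S n ω = 1) :
    ∃ l, IsFirstPassage l ∧ ω ∈ cylinder X l := by
  set L := List.ofFn fun i : Fin n => decide (X i ω = 1)
  have hL : ω ∈ cylinder X L := fun i hi => by
    rcases hω i with h | h <;> norm_num [L, h, step]
  have hLn : height L L.length = 1 := by
    have h := walk_eq_height hS hL le_rfl
    rw [List.length_ofFn, hn] at h
    rw [List.length_ofFn]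
    exact_mod_cast h.symm
  obtain ⟨m, r, hLmr, hm⟩ := exists_isFirstPassage_prefix hLn.ge
  refine ⟨m, hm, fun i hi => ?_⟩
  have := hL i (by rw [hLmr, List.length_append]; omega)
  simpa [hLmr, List.getElem_append_left hi] using this

variable [MeasurableSpace Ω] {P : Measure Ω}

lemma ae_forall_eq_one_or_eq_neg_one (hmeas : ∀ i, Measurable (X i))
    (hdist : ∀ i, P.map (X i) = rademacher) : ∀ᵐ ω ∂P, ∀ i, X i ω = 1 ∨ X i ω = -1 :=
  ae_all_iff.mpr fun i => ae_of_ae_map (hmeas i).aemeasurable (hdist i ▸ ae_rademacher)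

lemma measurableSet_cylinder (hmeas : ∀ i, Measurable (X i)) (l : List Bool) :
    MeasurableSet (cylinder X l) := by
  rw [cylinder_eq_biInter]
  exact .biInter (Finset.range _).countable_toSet fun i _ => hmeas i (measurableSet_singleton _)

lemma measure_cylinder (hindep : iIndepFun X P) (hmeas : ∀ i, Measurable (X i))
    (hdist : ∀ i, P.map (X i) = rademacher) (l : List Bool) :
    P (cylinder X l) = weight l := by
  rw [cylinder_eq_biInter, hindep.meas_biInter fun i _ => ⟨_, measurableSet_singleton _, rfl⟩]
  simp only [← Measure.map_apply (hmeas _) (measurableSet_singleton _), hdist,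
    rademacher_singleton_step, Finset.prod_const, Finset.card_range, weight]

lemma measure_iUnion_cylinder (hindep : iIndepFun X P) (hmeas : ∀ i, Measurable (X i))
    (hdist : ∀ i, P.map (X i) = rademacher)
    (hS : ∀ m ω, S m ω = ∑ i ∈ Finset.range m, X i ω) {p : List Bool → Prop}
    (hp : ∀ l, p l → IsFirstPassage l) :
    P (⋃ l : {l // p l}, cylinder X l) = ∑' l : {l // p l}, weight l := by
  rw [measure_iUnion (fun l l' hne => Set.disjoint_left.mpr fun ω hω hω' =>
      hne (Subtype.ext (eq_of_mem_cylinder hS (hp _ l.2) (hp _ l'.2) hω hω')))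
    fun l => measurableSet_cylinder hmeas l]
  exact tsum_congr fun l => measure_cylinder hindep hmeas hdist l

lemma firstPassageWeight_eq_one [IsProbabilityMeasure P] (hindep : iIndepFun X P)
    (hmeas : ∀ i, Measurable (X i)) (hdist : ∀ i, P.map (X i) = rademacher)
    (hS : ∀ m ω, S m ω = ∑ i ∈ Finset.range m, X i ω) : firstPassageWeight = 1 := by
  have hle : firstPassageWeight ≤ 1 := by
    rw [firstPassageWeight, ← measure_iUnion_cylinder hindep hmeas hdist hS fun _ h => h]
    exact prob_le_one
  exact ENNReal.eq_one_of_eq_inv_two_add _ (ne_top_of_le_ne_top ENNReal.one_ne_top hle)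
    firstPassageWeight_eq

lemma setOf_nonnegCount_ae_eq_iUnion_cylinder (hmeas : ∀ i, Measurable (X i))
    (hdist : ∀ i, P.map (X i) = rademacher) (hS : ∀ m ω, S m ω = ∑ i ∈ Finset.range m, X i ω)
    (hτ : ∀ ω, τ ω = sInf {n : ℕ | 1 ≤ n ∧ S n ω = 1})
    (hN : ∀ ω, N ω = ((Finset.Icc 1 (τ ω)).filter (fun j => 0 ≤ S j ω)).card)
    {k : ℕ} (hk : 1 ≤ k) :
    {ω | N ω = k} =ᵐ[P] ⋃ l : {l // IsFirstPassage l ∧ nonnegCount l = k}, cylinder X l := by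
  filter_upwards [ae_forall_eq_one_or_eq_neg_one hmeas hdist] with ω hω
  refine propext ⟨fun (hNk : N ω = k) => ?_, fun h => ?_⟩
  · -- `k ≥ 1` excludes `τ ω = 0`, the junk value `sInf ∅` on paths that never reach `1`.
    have hτpos : 0 < τ ω := Nat.pos_of_ne_zero fun h => by
      rw [hN, h, Finset.Icc_eq_empty (by omega), Finset.filter_empty, Finset.card_empty] at hNk
      omega
    rw [hτ] at hτpos
    obtain ⟨l, hl, hωl⟩ :=
      exists_isFirstPassage_mem_cylinder hS hω (Nat.sInf_mem (Nat.nonempty_of_pos_sInf hτpos)).2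
    exact Set.mem_iUnion.mpr
      ⟨⟨l, hl, (nonnegCount_eq_of_mem_cylinder hS hτ hN hl hωl).symm.trans hNk⟩, hωl⟩
  · obtain ⟨⟨l, hl, rfl⟩, hωl⟩ := Set.mem_iUnion.mp h
    exact nonnegCount_eq_of_mem_cylinder hS hτ hN hl hωl

lemma measure_nonnegCount_eq_pow [IsProbabilityMeasure P] (hindep : iIndepFun X P)
    (hmeas : ∀ i, Measurable (X i)) (hdist : ∀ i, P.map (X i) = rademacher)
    (hS : ∀ m ω, S m ω = ∑ i ∈ Finset.range m, X i ω)
    (hτ : ∀ ω, τ ω = sInf {n : ℕ | 1 ≤ n ∧ S n ω = 1})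
    (hN : ∀ ω, N ω = ((Finset.Icc 1 (τ ω)).filter (fun j => 0 ≤ S j ω)).card)
    {k : ℕ} (hk : 1 ≤ k) : P {ω | N ω = k} = 2⁻¹ ^ k := by
  rw [measure_congr (setOf_nonnegCount_ae_eq_iUnion_cylinder hmeas hdist hS hτ hN hk),
    measure_iUnion_cylinder hindep hmeas hdist hS fun _ h => h.1, ← firstPassageWeightOfCount,
    firstPassageWeightOfCount_eq_pow (firstPassageWeight_eq_one hindep hmeas hdist hS) hk]

lemma measure_nonnegCount_eq_zero [IsProbabilityMeasure P] (hindep : iIndepFun X P)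
    (hmeas : ∀ i, Measurable (X i)) (hdist : ∀ i, P.map (X i) = rademacher)
    (hS : ∀ m ω, S m ω = ∑ i ∈ Finset.range m, X i ω)
    (hτ : ∀ ω, τ ω = sInf {n : ℕ | 1 ≤ n ∧ S n ω = 1})
    (hN : ∀ ω, N ω = ((Finset.Icc 1 (τ ω)).filter (fun j => 0 ≤ S j ω)).card) :
    P {ω | N ω = 0} = 0 := by
  have hU : P (⋃ l : {l // IsFirstPassage l}, cylinder X l) = 1 := by
    rw [measure_iUnion_cylinder hindep hmeas hdist hS fun _ h => h, ← firstPassageWeight,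
      firstPassageWeight_eq_one hindep hmeas hdist hS]
  have hmeasU : MeasurableSet (⋃ l : {l // IsFirstPassage l}, cylinder X l) :=
    .iUnion fun l => measurableSet_cylinder hmeas l
  refine measure_mono_null ?_ ((prob_compl_eq_zero_iff hmeasU).mpr hU)
  intro ω (hω : N ω = 0) hmem
  obtain ⟨l, hωl⟩ := Set.mem_iUnion.mp hmem
  have := l.2.one_le_nonnegCount
  rw [← nonnegCount_eq_of_mem_cylinder hS hτ hN l.2 hωl] at this
  omega

lemma measurable_walk (hmeas : ∀ i, Measurable (X i))
    (hS : ∀ m ω, S m ω = ∑ i ∈ Finset.range m, X i ω) (m : ℕ) : Measurable (S m) := by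
  rw [funext (hS m)]
  exact Finset.measurable_sum _ fun i _ => hmeas i

lemma measurable_hittingTime (hmeas : ∀ i, Measurable (X i))
    (hS : ∀ m ω, S m ω = ∑ i ∈ Finset.range m, X i ω)
    (hτ : ∀ ω, τ ω = sInf {n : ℕ | 1 ≤ n ∧ S n ω = 1}) : Measurable τ := by
  rw [funext hτ]
  exact measurable_sInf_setOf fun n =>
    (MeasurableSet.const _).inter (measurable_walk hmeas hS n (measurableSet_singleton 1))

lemma measurable_nonnegCount (hmeas : ∀ i, Measurable (X i))
    (hS : ∀ m ω, S m ω = ∑ i ∈ Finset.range m, X i ω)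
    (hτ : ∀ ω, τ ω = sInf {n : ℕ | 1 ≤ n ∧ S n ω = 1})
    (hN : ∀ ω, N ω = ((Finset.Icc 1 (τ ω)).filter (fun j => 0 ≤ S j ω)).card) :
    Measurable N := by
  have hcount : Measurable fun q : Ω × ℕ => ((Finset.Icc 1 q.2).filter (0 ≤ S · q.1)).card :=
    measurable_from_prod_countable_left fun n => by
      simp_rw [Finset.card_filter]
      exact Finset.measurable_sum _ fun j _ => Measurable.ite
        (measurableSet_le measurable_const (measurable_walk hmeas hS j)) measurable_const
        measurable_const
  rw [funext hN]
  exact hcount.comp (measurable_id.prodMk (measurable_hittingTime hmeas hS hτ))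

end SimpleRandomWalk

open ProbabilityTheory SimpleRandomWalk

theorem ssrw_nonneg_steps_before_hitting_one
    {Ω : Type*} [MeasurableSpace Ω] (P : Measure Ω) [IsProbabilityMeasure P]
    (X : ℕ → Ω → ℝ)
    (hindep : iIndepFun X P)
    (hmeas : ∀ i, Measurable (X i))
    (hdist : ∀ i, Measure.map (X i) P
      = (1 / 2 : ENNReal) • Measure.dirac (1 : ℝ)
          + (1 / 2 : ENNReal) • Measure.dirac (-1 : ℝ))
    (S : ℕ → Ω → ℝ) (hS : ∀ m ω, S m ω = ∑ i ∈ Finset.range m, X i ω)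
    (τ : Ω → ℕ) (hτ : ∀ ω, τ ω = sInf {n : ℕ | 1 ≤ n ∧ S n ω = 1})
    (N : Ω → ℕ)
    (hN : ∀ ω, N ω = ((Finset.Icc 1 (τ ω)).filter (fun j => 0 ≤ S j ω)).card) :
    (∀ k : ℕ, 1 ≤ k → P {ω | N ω = k} = (2 : ENNReal) ^ (-(k : ℤ)))
      ∧ (∀ z : ℝ, |z| ≤ 1 → ∫ ω, z ^ N ω ∂P = z / (2 - z)) := by
  have hlaw : ∀ k, 1 ≤ k → P {ω | N ω = k} = 2⁻¹ ^ k := fun k hk =>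
    measure_nonnegCount_eq_pow hindep hmeas hdist hS hτ hN hk
  refine ⟨fun k hk => by rw [hlaw k hk, ENNReal.zpow_neg, zpow_natCast, ENNReal.inv_pow],
    fun z hz => ?_⟩
  exact integral_pow_eq_of_measure_eq_pow (measurable_nonnegCount hmeas hS hτ hN)
    (measure_nonnegCount_eq_zero hindep hmeas hdist hS hτ hN) hlaw hz
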